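/- Complementary slackness implies Lagrangian minimality: let (x*,y*) be a primal feasible solution of (LinearP) and let (λ̄, μ̄, ν̄, π̄) be a dual feasible solution of (LinearD) (with common finite support points c_k, weights m̄_k for μ̄ and n̄_{s,k} for ν̄_s) such that the complementary slackness conditions hold: (i) m̄_k > 0 ⇒ CVaR_α(c_k⊤Ĝ(x*,y*)) = CVaR_α(c_k⊤Z); (ii) n̄_{s,k} > 0 ⇒ VaR_α(c_k⊤Ĝ(x*,y*)) ≤ c_k⊤ĝ_s(x*,y*_s); (iii) n̄_{s,k} < m̄_k/(1−α) ⇒ VaR_α(c_k⊤Ĝ(x*,y*)) ≥ c_k⊤ĝ_s(x*,y*_s); (iv) λ̄⊤(b − Ax*) = 0; (v) π̄_s⊤(T_s x* + W_s y*_s − h_s) = 0 for all s ∈ S; (vi) (f⊤ + λ̄⊤A − Σ_s p_s π̄_s⊤T_s + Σ_s p_s Σ_k n̄_{s,k} c_k⊤ḡ_s) x* = 0; (vii) (q_s⊤ − π̄_s⊤W_s + Σ_k n̄_{s,k} c_k⊤g̃_s) y*_s = 0 for all s ∈ S. Then L(x,y,μ̄) ≥ L(x*,y*,μ̄) for every (x,y)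 with x ∈ X and y_s ∈ Y(x,s) for all s ∈ S. -/

import Mathlib

open Matrix
open scoped BigOperators Classical

/-- Conditional value-at-risk at confidence level `α` of a random variable with
realizations `v s` and probabilities `p s` on a finite space. -/
noncomputable def CVaR {ι : Type*} [Fintype ι] (α : ℝ) (p v : ι → ℝ) : ℝ :=
  sInf {r : ℝ | ∃ η : ℝ, r = η + (1 - α)⁻¹ * ∑ s, p s * max (v s - η) 0}

/-- Value-at-risk at confidence level `α`: the minimal `η` with `P(V ≤ η) ≥ α`
(stated as an infimum; the minimum exists for finitely many realizations). -/
noncomputable def VaR {ι : Type*} [Fintype ι] (α : ℝ) (p v : ι → ℝ) : ℝ :=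
  sInf {η : ℝ | α ≤ ∑ s, if v s ≤ η then p s else 0}

/-- The scenario-`s` realization `ĝ_s(x,y_s) = ḡ_s x + g̃_s y_s` of the random
outcome vector `Ĝ(x,y)`. -/
noncomputable def Ghat {m n1 n2 d : ℕ} (gbar : Fin m → Matrix (Fin d) (Fin n1) ℝ)
    (gtil : Fin m → Matrix (Fin d) (Fin n2) ℝ)
    (x : Fin n1 → ℝ) (y : Fin m → Fin n2 → ℝ) (s : Fin m) : Fin d → ℝ :=
  (gbar s).mulVec x + (gtil s).mulVec (y s)

/-- `x ∈ X` and `y_s ∈ Y(x,s)` for every scenario `s`. -/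
def InXY {m m1 m2 n1 n2 : ℕ} (A : Matrix (Fin m1) (Fin n1) ℝ) (b : Fin m1 → ℝ)
    (Tm : Fin m → Matrix (Fin m2) (Fin n1) ℝ)
    (Wm : Fin m → Matrix (Fin m2) (Fin n2) ℝ)
    (hvec : Fin m → Fin m2 → ℝ) (x : Fin n1 → ℝ) (y : Fin m → Fin n2 → ℝ) : Prop :=
  (∀ i, 0 ≤ x i) ∧ (∀ i, A.mulVec x i ≤ b i) ∧
    ∀ s, (∀ j, 0 ≤ y s j) ∧ ∀ i, hvec s i ≤ ((Tm s).mulVec x + (Wm s).mulVec (y s)) i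

/-- Feasibility for problem (LinearP). -/
def PrimalFeas {m m1 m2 n1 n2 d τ : ℕ} (α : ℝ) (p : Fin m → ℝ)
    (A : Matrix (Fin m1) (Fin n1) ℝ) (b : Fin m1 → ℝ)
    (Tm : Fin m → Matrix (Fin m2) (Fin n1) ℝ)
    (Wm : Fin m → Matrix (Fin m2) (Fin n2) ℝ)
    (hvec : Fin m → Fin m2 → ℝ)
    (gbar : Fin m → Matrix (Fin d) (Fin n1) ℝ)
    (gtil : Fin m → Matrix (Fin d) (Fin n2) ℝ)
    (z : Fin τ → Fin d → ℝ) (pt : Fin τ → ℝ) (C : Set (Fin d → ℝ))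
    (x : Fin n1 → ℝ) (y : Fin m → Fin n2 → ℝ) : Prop :=
  InXY A b Tm Wm hvec x y ∧
    ∀ c ∈ C, CVaR α p (fun s => c ⬝ᵥ Ghat gbar gtil x y s)
      ≤ CVaR α pt (fun i => c ⬝ᵥ z i)

/-- Objective function of problem (LinearP). -/
noncomputable def PrimalObj {m n1 n2 : ℕ} (p : Fin m → ℝ) (fv : Fin n1 → ℝ)
    (q : Fin m → Fin n2 → ℝ) (x : Fin n1 → ℝ) (y : Fin m → Fin n2 → ℝ) : ℝ :=
  fv ⬝ᵥ x + ∑ s, p s * (q s ⬝ᵥ y s)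

/-- Feasibility for the dual problem (LinearD), with the finitely supported
measures `μ` and `ν_s` represented by common support points `c k` and weights
`mw k` and `nw s k` (`k ∈ Fin K`). -/
def DualFeas {m m1 m2 n1 n2 d K : ℕ} (α : ℝ) (p : Fin m → ℝ)
    (A : Matrix (Fin m1) (Fin n1) ℝ) (fv : Fin n1 → ℝ)
    (Tm : Fin m → Matrix (Fin m2) (Fin n1) ℝ)
    (Wm : Fin m → Matrix (Fin m2) (Fin n2) ℝ)
    (q : Fin m → Fin n2 → ℝ)
    (gbar : Fin m → Matrix (Fin d) (Fin n1) ℝ)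
    (gtil : Fin m → Matrix (Fin d) (Fin n2) ℝ)
    (C : Set (Fin d → ℝ))
    (c : Fin K → Fin d → ℝ) (mw : Fin K → ℝ) (nw : Fin m → Fin K → ℝ)
    (lam : Fin m1 → ℝ) (piv : Fin m → Fin m2 → ℝ) : Prop :=
  (∀ k, c k ∈ C) ∧ (∀ k, 0 ≤ mw k) ∧ (∀ s k, 0 ≤ nw s k) ∧
    (∀ i, 0 ≤ lam i) ∧ (∀ s i, 0 ≤ piv s i) ∧
    (∀ k, ∑ s, p s * nw s k = mw k) ∧
    (∀ s k, nw s k ≤ mw k / (1 - α)) ∧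
    (∀ j, ∑ s, p s * (Matrix.vecMul (piv s) (Tm s) j
        - ∑ k, nw s k * Matrix.vecMul (c k) (gbar s) j)
      ≤ fv j + Matrix.vecMul lam A j) ∧
    ∀ s j, Matrix.vecMul (piv s) (Wm s) j
        - ∑ k, nw s k * Matrix.vecMul (c k) (gtil s) j ≤ q s j

/-- Objective function of the dual problem (LinearD). -/
noncomputable def DualObj {m m1 m2 d τ K : ℕ} (α : ℝ) (p : Fin m → ℝ)
    (b : Fin m1 → ℝ) (hvec : Fin m → Fin m2 → ℝ)
    (z : Fin τ → Fin d → ℝ) (pt : Fin τ → ℝ)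
    (c : Fin K → Fin d → ℝ) (mw : Fin K → ℝ)
    (lam : Fin m1 → ℝ) (piv : Fin m → Fin m2 → ℝ) : ℝ :=
  -(∑ k, mw k * CVaR α pt (fun i => c k ⬝ᵥ z i)) - lam ⬝ᵥ b
    + ∑ s, p s * (piv s ⬝ᵥ hvec s)

/-- The Lagrangian `L(x,y,μ)` for a finitely supported nonnegative measure `μ`
on `C` with support points `c k` and weights `mw k`. -/
noncomputable def Lagr {m n1 n2 d τ K : ℕ} (α : ℝ) (p : Fin m → ℝ)
    (fv : Fin n1 → ℝ) (q : Fin m → Fin n2 → ℝ)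
    (gbar : Fin m → Matrix (Fin d) (Fin n1) ℝ)
    (gtil : Fin m → Matrix (Fin d) (Fin n2) ℝ)
    (z : Fin τ → Fin d → ℝ) (pt : Fin τ → ℝ)
    (c : Fin K → Fin d → ℝ) (mw : Fin K → ℝ)
    (x : Fin n1 → ℝ) (y : Fin m → Fin n2 → ℝ) : ℝ :=
  PrimalObj p fv q x y
    + ∑ k, mw k * CVaR α p (fun s => c k ⬝ᵥ Ghat gbar gtil x y s)
    - ∑ k, mw k * CVaR α pt (fun i => c k ⬝ᵥ z i)

/-!
Subtracting the dual objective from the Lagrangian leaves the pairing of the primal slacks with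
the dual variables and of the reduced costs with the primal variables, plus, for each support
point `c k`, the difference `m_k · CVaR(c_k⊤Ĝ) - E[n_k · c_k⊤Ĝ]`. For every `(x, y)` the pairing
is nonnegative by primal and dual feasibility, and so is the CVaR difference: since `n_k / m_k`
is a probability density bounded by `(1 - α)⁻¹`, `E[n_k V] / m_k` bounds from below every value
`η + (1 - α)⁻¹ E[(V - η)⁺]` of the Rockafellar–Uryasev function, whose infimum is `CVaR(V)`.
At `(x*, y*)` conditions (iv)–(vii) make the pairing vanish, and (ii)–(iii) force `n_k` to be `0`
below `VaR` and `m_k / (1 - α)` above it, so that `E[n_k V]` equals `m_k` times the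
Rockafellar–Uryasev function at `η = VaR`, which is at least `m_k · CVaR(V)`. Hence
`L(x*, y*) ≤ dual objective ≤ L(x, y)`.
-/

section CVaRDual

variable {ι : Type*} [Fintype ι] {α : ℝ} {p v n : ι → ℝ} {M : ℝ}

noncomputable def cvarObj (α : ℝ) (p v : ι → ℝ) (η : ℝ) : ℝ :=
  η + (1 - α)⁻¹ * ∑ s, p s * max (v s - η) 0

theorem CVaR_eq_iInf_cvarObj : CVaR α p v = ⨅ η, cvarObj α p v η := by
  unfold CVaR iInf
  congr 1
  ext r
  simp only [Set.mem_ofPred_eq, Set.mem_range, cvarObj, eq_comm]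

theorem mul_le_mul_max_zero {n N t : ℝ} (hn : 0 ≤ n) (hnN : n ≤ N) : n * t ≤ N * max t 0 :=
  calc n * t ≤ n * max t 0 := mul_le_mul_of_nonneg_left (le_max_left t 0) hn
    _ ≤ N * max t 0 := mul_le_mul_of_nonneg_right hnN (le_max_right t 0)

theorem mul_eq_mul_max_zero {n N t : ℝ} (hn : 0 ≤ n) (hnN : n ≤ N)
    (hpos : 0 < n → 0 ≤ t) (hlt : n < N → t ≤ 0) : n * t = N * max t 0 := by
  rcases lt_trichotomy t 0 with ht | rfl | ht
  · have : n = 0 := le_antisymm (not_lt.1 fun h => (hpos h).not_gt ht) hn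
    simp [this, max_eq_right ht.le]
  · simp
  · have : n = N := le_antisymm hnN (not_lt.1 fun h => (hlt h).not_gt ht)
    rw [this, max_eq_left ht.le]

theorem mul_cvarObj_eq_sum (hsum : ∑ s, p s * n s = M) (η : ℝ) :
    M * cvarObj α p v η = ∑ s, p s * (n s * η + M / (1 - α) * max (v s - η) 0) := by
  have hη : M * η = ∑ s, p s * (n s * η) := by
    rw [← hsum, Finset.sum_mul]
    exact Finset.sum_congr rfl fun s _ => by ring
  have htail : M * ((1 - α)⁻¹ * ∑ s, p s * max (v s - η) 0)
      = ∑ s, p s * (M / (1 - α) * max (v s - η) 0) := by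
    rw [Finset.mul_sum, Finset.mul_sum]
    exact Finset.sum_congr rfl fun s _ => by ring
  simp only [cvarObj, mul_add, hη, htail, Finset.sum_add_distrib]

theorem sum_mul_le_mul_cvarObj (hp : ∀ s, 0 ≤ p s) (hn : ∀ s, 0 ≤ n s)
    (hnM : ∀ s, n s ≤ M / (1 - α)) (hsum : ∑ s, p s * n s = M) (η : ℝ) :
    ∑ s, p s * n s * v s ≤ M * cvarObj α p v η := by
  rw [mul_cvarObj_eq_sum hsum]
  refine Finset.sum_le_sum fun s _ => ?_
  have := mul_le_mul_max_zero (t := v s - η) (hn s) (hnM s)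
  rw [mul_assoc]
  exact mul_le_mul_of_nonneg_left (by linarith) (hp s)

theorem sum_mul_eq_mul_cvarObj (hn : ∀ s, 0 ≤ n s) (hnM : ∀ s, n s ≤ M / (1 - α))
    (hsum : ∑ s, p s * n s = M) {η : ℝ} (hpos : ∀ s, 0 < n s → η ≤ v s)
    (hlt : ∀ s, n s < M / (1 - α) → v s ≤ η) :
    ∑ s, p s * n s * v s = M * cvarObj α p v η := by
  rw [mul_cvarObj_eq_sum hsum]
  refine Finset.sum_congr rfl fun s _ => ?_
  have := mul_eq_mul_max_zero (t := v s - η) (hn s) (hnM s)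
    (fun h => sub_nonneg.2 (hpos s h)) (fun h => sub_nonpos.2 (hlt s h))
  rw [mul_assoc]
  congr 1
  linarith

theorem sum_mul_le_mul_CVaR (hp : ∀ s, 0 ≤ p s) (hn : ∀ s, 0 ≤ n s)
    (hnM : ∀ s, n s ≤ M / (1 - α)) (hsum : ∑ s, p s * n s = M) :
    ∑ s, p s * n s * v s ≤ M * CVaR α p v := by
  have hM : 0 ≤ M := hsum ▸ Finset.sum_nonneg fun s _ => mul_nonneg (hp s) (hn s)
  rcases hM.eq_or_lt with rfl | hM
  · simpa using sum_mul_le_mul_cvarObj hp hn hnM hsum 0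
  rw [CVaR_eq_iInf_cvarObj, ← div_le_iff₀' hM]
  exact le_ciInf fun η => (div_le_iff₀' hM).2 (sum_mul_le_mul_cvarObj hp hn hnM hsum η)

theorem mul_CVaR_le_sum_mul (hp : ∀ s, 0 ≤ p s) (hn : ∀ s, 0 ≤ n s)
    (hnM : ∀ s, n s ≤ M / (1 - α)) (hsum : ∑ s, p s * n s = M) {η : ℝ}
    (hpos : ∀ s, 0 < n s → η ≤ v s) (hlt : ∀ s, n s < M / (1 - α) → v s ≤ η) :
    M * CVaR α p v ≤ ∑ s, p s * n s * v s := by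
  have hM : 0 ≤ M := hsum ▸ Finset.sum_nonneg fun s _ => mul_nonneg (hp s) (hn s)
  rw [sum_mul_eq_mul_cvarObj hn hnM hsum hpos hlt]
  rcases hM.eq_or_lt with rfl | hM
  · simp
  have hbdd : BddBelow (Set.range (cvarObj α p v)) := by
    refine ⟨(∑ s, p s * n s * v s) / M, ?_⟩
    rintro _ ⟨η', rfl⟩
    exact (div_le_iff₀' hM).2 (sum_mul_le_mul_cvarObj hp hn hnM hsum η')
  rw [CVaR_eq_iInf_cvarObj]
  exact mul_le_mul_of_nonneg_left (ciInf_le hbdd η) hM.le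

end CVaRDual

section LinearDuality

variable {m m1 m2 n1 n2 d τ K : ℕ} {α : ℝ} {p : Fin m → ℝ}
  {A : Matrix (Fin m1) (Fin n1) ℝ} {b : Fin m1 → ℝ} {fv : Fin n1 → ℝ}
  {Tm : Fin m → Matrix (Fin m2) (Fin n1) ℝ} {Wm : Fin m → Matrix (Fin m2) (Fin n2) ℝ}
  {q : Fin m → Fin n2 → ℝ} {hvec : Fin m → Fin m2 → ℝ}
  {gbar : Fin m → Matrix (Fin d) (Fin n1) ℝ} {gtil : Fin m → Matrix (Fin d) (Fin n2) ℝ}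
  {z : Fin τ → Fin d → ℝ} {pt : Fin τ → ℝ} {C : Set (Fin d → ℝ)}
  {c : Fin K → Fin d → ℝ} {mw : Fin K → ℝ} {nw : Fin m → Fin K → ℝ}
  {lam : Fin m1 → ℝ} {piv : Fin m → Fin m2 → ℝ} {x : Fin n1 → ℝ} {y : Fin m → Fin n2 → ℝ}

variable (p A fv Tm gbar c nw lam piv) in
def firstStageReducedCost : Fin n1 → ℝ := fun j => fv j + Matrix.vecMul lam A j
  - ∑ s, p s * Matrix.vecMul (piv s) (Tm s) j
  + ∑ s, p s * ∑ k, nw s k * Matrix.vecMul (c k) (gbar s) j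

variable (q Wm gtil c nw piv) in
def secondStageReducedCost (s : Fin m) : Fin n2 → ℝ := fun j =>
  q s j - Matrix.vecMul (piv s) (Wm s) j + ∑ k, nw s k * Matrix.vecMul (c k) (gtil s) j

variable (p A b fv Tm Wm q hvec gbar gtil c nw lam piv x y) in
def complementarityGap : ℝ :=
  firstStageReducedCost p A fv Tm gbar c nw lam piv ⬝ᵥ x
    + ∑ s, p s * (secondStageReducedCost Wm q gtil c nw piv s ⬝ᵥ y s)
    + lam ⬝ᵥ (b - A *ᵥ x)
    + ∑ s, p s * (piv s ⬝ᵥ (Tm s *ᵥ x + Wm s *ᵥ y s - hvec s))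

theorem firstStageReducedCost_eq :
    firstStageReducedCost p A fv Tm gbar c nw lam piv = fv + lam ᵥ* A
      - ∑ s, p s • piv s ᵥ* Tm s + ∑ s, p s • ∑ k, nw s k • c k ᵥ* gbar s := by
  ext j
  simp [firstStageReducedCost, Finset.sum_apply]

theorem secondStageReducedCost_eq (s : Fin m) :
    secondStageReducedCost Wm q gtil c nw piv s
      = q s - piv s ᵥ* Wm s + ∑ k, nw s k • c k ᵥ* gtil s := by
  ext j
  simp [secondStageReducedCost, Finset.sum_apply]

variable (A b Tm Wm hvec nw lam piv) in
theorem lagr_sub_dualObj :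
    Lagr α p fv q gbar gtil z pt c mw x y - DualObj α p b hvec z pt c mw lam piv
      = complementarityGap p A b fv Tm Wm q hvec gbar gtil c nw lam piv x y
        + ∑ k, (mw k * CVaR α p (fun s => c k ⬝ᵥ Ghat gbar gtil x y s)
          - ∑ s, p s * nw s k * (c k ⬝ᵥ Ghat gbar gtil x y s)) := by
  rw [Finset.sum_sub_distrib, Finset.sum_comm (f := fun k s => p s * nw s k * _)]
  simp only [Lagr, DualObj, complementarityGap, firstStageReducedCost_eq,
    secondStageReducedCost_eq, PrimalObj, Ghat, add_dotProduct, sub_dotProduct, sum_dotProduct,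
    smul_dotProduct, dotProduct_add, dotProduct_sub, dotProduct_mulVec, smul_eq_mul, mul_add,
    mul_sub, Finset.mul_sum, Finset.sum_add_distrib, Finset.sum_sub_distrib, mul_assoc]
  ring

theorem complementarityGap_nonneg (hp : ∀ s, 0 ≤ p s)
    (hD : DualFeas α p A fv Tm Wm q gbar gtil C c mw nw lam piv)
    (hxy : InXY A b Tm Wm hvec x y) :
    0 ≤ complementarityGap p A b fv Tm Wm q hvec gbar gtil c nw lam piv x y := by
  obtain ⟨-, -, -, hlam, hpiv, -, -, hdualx, hdualy⟩ := hD
  obtain ⟨hx, hAx, hy⟩ := hxy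
  have hfirst : 0 ≤ firstStageReducedCost p A fv Tm gbar c nw lam piv := by
    intro j
    have := hdualx j
    simp only [mul_sub, Finset.sum_sub_distrib] at this
    simp only [firstStageReducedCost, Pi.zero_apply]
    linarith
  have hsecond (s : Fin m) : 0 ≤ secondStageReducedCost Wm q gtil c nw piv s := by
    intro j
    have := hdualy s j
    simp only [secondStageReducedCost, Pi.zero_apply]
    linarith
  have hslack1 : 0 ≤ b - A *ᵥ x := fun i => sub_nonneg.2 (hAx i)
  have hslack2 (s : Fin m) : 0 ≤ Tm s *ᵥ x + Wm s *ᵥ y s - hvec s :=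
    fun i => sub_nonneg.2 ((hy s).2 i)
  unfold complementarityGap
  refine add_nonneg (add_nonneg (add_nonneg ?_ ?_) ?_) ?_
  · exact dotProduct_nonneg_of_nonneg hfirst hx
  · exact Finset.sum_nonneg fun s _ =>
      mul_nonneg (hp s) (dotProduct_nonneg_of_nonneg (hsecond s) (hy s).1)
  · exact dotProduct_nonneg_of_nonneg hlam hslack1
  · exact Finset.sum_nonneg fun s _ =>
      mul_nonneg (hp s) (dotProduct_nonneg_of_nonneg (hpiv s) (hslack2 s))

theorem complementarityGap_eq_zero (h1 : lam ⬝ᵥ (b - A *ᵥ x) = 0)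
    (h2 : ∀ s, piv s ⬝ᵥ (Tm s *ᵥ x + Wm s *ᵥ y s - hvec s) = 0)
    (h3 : firstStageReducedCost p A fv Tm gbar c nw lam piv ⬝ᵥ x = 0)
    (h4 : ∀ s, secondStageReducedCost Wm q gtil c nw piv s ⬝ᵥ y s = 0) :
    complementarityGap p A b fv Tm Wm q hvec gbar gtil c nw lam piv x y = 0 := by
  simp [complementarityGap, h1, h2, h3, h4]

theorem dualObj_le_lagr (hp : ∀ s, 0 ≤ p s)
    (hD : DualFeas α p A fv Tm Wm q gbar gtil C c mw nw lam piv)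
    (hxy : InXY A b Tm Wm hvec x y) :
    DualObj α p b hvec z pt c mw lam piv ≤ Lagr α p fv q gbar gtil z pt c mw x y := by
  have hgap := complementarityGap_nonneg hp hD hxy
  obtain ⟨-, -, hn, -, -, hsum, hnM, -, -⟩ := hD
  rw [← sub_nonneg, lagr_sub_dualObj A b Tm Wm hvec nw lam piv]
  exact add_nonneg hgap <| Finset.sum_nonneg fun k _ => sub_nonneg.2 <|
    sum_mul_le_mul_CVaR hp (fun s => hn s k) (fun s => hnM s k) (hsum k)

theorem lagr_le_dualObj (hp : ∀ s, 0 ≤ p s)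
    (hD : DualFeas α p A fv Tm Wm q gbar gtil C c mw nw lam piv) {η : Fin K → ℝ}
    (hpos : ∀ s k, 0 < nw s k → η k ≤ c k ⬝ᵥ Ghat gbar gtil x y s)
    (hlt : ∀ s k, nw s k < mw k / (1 - α) → c k ⬝ᵥ Ghat gbar gtil x y s ≤ η k)
    (hgap : complementarityGap p A b fv Tm Wm q hvec gbar gtil c nw lam piv x y = 0) :
    Lagr α p fv q gbar gtil z pt c mw x y ≤ DualObj α p b hvec z pt c mw lam piv := by
  obtain ⟨-, -, hn, -, -, hsum, hnM, -, -⟩ := hD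
  rw [← sub_nonpos, lagr_sub_dualObj A b Tm Wm hvec nw lam piv, hgap, zero_add]
  exact Finset.sum_nonpos fun k _ => sub_nonpos.2 <| mul_CVaR_le_sum_mul hp (fun s => hn s k)
    (fun s => hnM s k) (hsum k) (fun s => hpos s k) (fun s => hlt s k)

end LinearDuality

theorem complementary_slackness_implies_lagrangian_min_general
    (m m1 m2 n1 n2 d τ : ℕ)
    (p : Fin m → ℝ) (hp : ∀ s, 0 < p s)
    (α : ℝ)
    (A : Matrix (Fin m1) (Fin n1) ℝ) (b : Fin m1 → ℝ) (fv : Fin n1 → ℝ)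
    (Tm : Fin m → Matrix (Fin m2) (Fin n1) ℝ)
    (Wm : Fin m → Matrix (Fin m2) (Fin n2) ℝ)
    (q : Fin m → Fin n2 → ℝ) (hvec : Fin m → Fin m2 → ℝ)
    (gbar : Fin m → Matrix (Fin d) (Fin n1) ℝ)
    (gtil : Fin m → Matrix (Fin d) (Fin n2) ℝ)
    (z : Fin τ → Fin d → ℝ)
    (pt : Fin τ → ℝ)
    (C : Set (Fin d → ℝ))
    (xstar : Fin n1 → ℝ) (ystar : Fin m → Fin n2 → ℝ)
    (K : ℕ) (c : Fin K → Fin d → ℝ) (mw : Fin K → ℝ) (nw : Fin m → Fin K → ℝ)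
    (lam : Fin m1 → ℝ) (piv : Fin m → Fin m2 → ℝ)
    (hDfeas : DualFeas α p A fv Tm Wm q gbar gtil C c mw nw lam piv)
    -- complementary slackness conditions (i)-(vii)
    (hcs2 : ∀ s k, 0 < nw s k →
      VaR α p (fun s' => c k ⬝ᵥ Ghat gbar gtil xstar ystar s')
        ≤ c k ⬝ᵥ Ghat gbar gtil xstar ystar s)
    (hcs3 : ∀ s k, nw s k < mw k / (1 - α) →
      c k ⬝ᵥ Ghat gbar gtil xstar ystar s
        ≤ VaR α p (fun s' => c k ⬝ᵥ Ghat gbar gtil xstar ystar s'))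
    (hcs4 : lam ⬝ᵥ (b - A.mulVec xstar) = 0)
    (hcs5 : ∀ s, piv s ⬝ᵥ ((Tm s).mulVec xstar + (Wm s).mulVec (ystar s) - hvec s) = 0)
    (hcs6 : (fun j => fv j + Matrix.vecMul lam A j
        - ∑ s, p s * Matrix.vecMul (piv s) (Tm s) j
        + ∑ s, p s * ∑ k, nw s k * Matrix.vecMul (c k) (gbar s) j) ⬝ᵥ xstar = 0)
    (hcs7 : ∀ s, (fun j => q s j - Matrix.vecMul (piv s) (Wm s) j
        + ∑ k, nw s k * Matrix.vecMul (c k) (gtil s) j) ⬝ᵥ ystar s = 0) :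
    ∀ x y, InXY A b Tm Wm hvec x y →
      Lagr α p fv q gbar gtil z pt c mw xstar ystar
        ≤ Lagr α p fv q gbar gtil z pt c mw x y := by
  intro x y hxy
  have hp_nonneg : ∀ s, 0 ≤ p s := fun s => (hp s).le
  refine (lagr_le_dualObj hp_nonneg hDfeas hcs2 hcs3 ?_).trans
    (dualObj_le_lagr hp_nonneg hDfeas hxy)
  exact complementarityGap_eq_zero hcs4 hcs5 hcs6 hcs7

/-- complementary slackness implies Lagrangian minimality of the
primal solution for the measure `μ̄` from the dual solution. -/
theorem complementary_slackness_implies_lagrangian_min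
    (m m1 m2 n1 n2 d τ : ℕ)
    (p : Fin m → ℝ) (hp : ∀ s, 0 < p s) (hp1 : ∑ s, p s = 1)
    (α : ℝ) (hα0 : 0 ≤ α) (hα1 : α < 1)
    (A : Matrix (Fin m1) (Fin n1) ℝ) (b : Fin m1 → ℝ) (fv : Fin n1 → ℝ)
    (Tm : Fin m → Matrix (Fin m2) (Fin n1) ℝ)
    (Wm : Fin m → Matrix (Fin m2) (Fin n2) ℝ)
    (q : Fin m → Fin n2 → ℝ) (hvec : Fin m → Fin m2 → ℝ)
    (gbar : Fin m → Matrix (Fin d) (Fin n1) ℝ)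
    (gtil : Fin m → Matrix (Fin d) (Fin n2) ℝ)
    (z : Fin τ → Fin d → ℝ)
    (pt : Fin τ → ℝ) (hpt : ∀ i, 0 < pt i) (hpt1 : ∑ i, pt i = 1)
    (C : Set (Fin d → ℝ)) (hCsub : C ⊆ {c | (∀ i, 0 ≤ c i) ∧ ∑ i, c i = 1})
    (hCpoly : ∃ F : Finset (Fin d → ℝ), C = convexHull ℝ (F : Set (Fin d → ℝ)))
    (xstar : Fin n1 → ℝ) (ystar : Fin m → Fin n2 → ℝ)
    (hPstar : PrimalFeas α p A b Tm Wm hvec gbar gtil z pt C xstar ystar)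
    (K : ℕ) (c : Fin K → Fin d → ℝ) (mw : Fin K → ℝ) (nw : Fin m → Fin K → ℝ)
    (lam : Fin m1 → ℝ) (piv : Fin m → Fin m2 → ℝ)
    (hDfeas : DualFeas α p A fv Tm Wm q gbar gtil C c mw nw lam piv)
    -- complementary slackness conditions (i)-(vii)
    (hcs1 : ∀ k, 0 < mw k →
      CVaR α p (fun s => c k ⬝ᵥ Ghat gbar gtil xstar ystar s)
        = CVaR α pt (fun i => c k ⬝ᵥ z i))
    (hcs2 : ∀ s k, 0 < nw s k →
      VaR α p (fun s' => c k ⬝ᵥ Ghat gbar gtil xstar ystar s')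
        ≤ c k ⬝ᵥ Ghat gbar gtil xstar ystar s)
    (hcs3 : ∀ s k, nw s k < mw k / (1 - α) →
      c k ⬝ᵥ Ghat gbar gtil xstar ystar s
        ≤ VaR α p (fun s' => c k ⬝ᵥ Ghat gbar gtil xstar ystar s'))
    (hcs4 : lam ⬝ᵥ (b - A.mulVec xstar) = 0)
    (hcs5 : ∀ s, piv s ⬝ᵥ ((Tm s).mulVec xstar + (Wm s).mulVec (ystar s) - hvec s) = 0)
    (hcs6 : (fun j => fv j + Matrix.vecMul lam A j
        - ∑ s, p s * Matrix.vecMul (piv s) (Tm s) j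
        + ∑ s, p s * ∑ k, nw s k * Matrix.vecMul (c k) (gbar s) j) ⬝ᵥ xstar = 0)
    (hcs7 : ∀ s, (fun j => q s j - Matrix.vecMul (piv s) (Wm s) j
        + ∑ k, nw s k * Matrix.vecMul (c k) (gtil s) j) ⬝ᵥ ystar s = 0) :
    ∀ x y, InXY A b Tm Wm hvec x y →
      Lagr α p fv q gbar gtil z pt c mw xstar ystar
        ≤ Lagr α p fv q gbar gtil z pt c mw x y :=
  complementary_slackness_implies_lagrangian_min_general m m1 m2 n1 n2 d τ p hp α A b fv Tm Wm q
    hvec gbar gtil z pt C xstar ystar K c mw nw lam piv hDfeas hcs2 hcs3 hcs4 hcs5 hcs6 hcs7
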